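/- arXiv:2107.05675 — 2 statements merged into one kernel-verified Lean document; each statement's English description precedes it below -/
import Mathlib

section
/- Let n ≥ 1, M ≥ 1, and let (Ω, P) be a probability space carrying independent random variables X : Ω → (Fin n → ZMod 2), uniformly distributed, and S : Ω → Fin M, uniformly distributed. Let Enc : Fin M → (Fin n → ZMod 2) be injective and set W := X + Enc(S). Then the mutual information I[W : X] equals n·log 2 − log M (in nats). (This identifies the privacy leakage I(W^n; X^n) of the fuzzy commitment scheme as n − log|𝒮| bits.) -/
open MeasureTheory ProbabilityTheory Real
open scoped ENNReal

/-- Shannon entropy (in nats) of the law of a random variable with values in a finite type. -/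
noncomputable def entropy {Ω α : Type*} [MeasurableSpace Ω] [MeasurableSpace α] [Fintype α]
    (X : Ω → α) (P : Measure Ω) : ℝ :=
  ∑ a : α, Real.negMulLog ((P.map X) {a}).toReal

/-- Mutual information (in nats): `I[X : Y] = H[X] + H[Y] − H[⟨X, Y⟩]`. -/
noncomputable def mutualInfo {Ω α β : Type*} [MeasurableSpace Ω] [MeasurableSpace α]
    [MeasurableSpace β] [Fintype α] [Fintype β]
    (X : Ω → α) (Y : Ω → β) (P : Measure Ω) : ℝ :=
  entropy X P + entropy Y P - entropy (fun ω => (X ω, Y ω)) P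

set_option linter.unusedVariables false in
lemma entropy_of_uniform_mass {Ω α : Type*} [MeasurableSpace Ω] [MeasurableSpace α] [Fintype α]
    [Nonempty α] (Y : Ω → α) (P : Measure Ω)
    (h : ∀ a, (P.map Y) {a} = (Fintype.card α : ℝ≥0∞)⁻¹) :
    entropy Y P = Real.log (Fintype.card α) := by
  have hc : (0:ℝ) < Fintype.card α := by positivity
  unfold entropy
  have hterm : ∀ a : α, Real.negMulLog ((P.map Y) {a}).toReal
      = (Fintype.card α : ℝ)⁻¹ * Real.log (Fintype.card α) := by
    intro a
    have h2 : ((Fintype.card α : ℝ≥0∞)⁻¹).toReal = (Fintype.card α : ℝ)⁻¹ := by simp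
    rw [h a, h2, Real.negMulLog, Real.log_inv]
    ring
  rw [Finset.sum_congr rfl (fun a _ => hterm a), Finset.sum_const, Finset.card_univ,
    nsmul_eq_mul]
  field_simp

lemma entropy_comp_injective {Ω α β : Type*} [MeasurableSpace Ω] [MeasurableSpace α]
    [MeasurableSpace β] [Fintype α] [Fintype β] [MeasurableSingletonClass α]
    [MeasurableSingletonClass β]
    (Z : Ω → α) (hZ : Measurable Z) (P : Measure Ω) (f : α → β) (hf : Function.Injective f) :
    entropy (f ∘ Z) P = entropy Z P := by
  classical
  have hfm : Measurable f := measurable_of_countable f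
  have hmap : P.map (f ∘ Z) = (P.map Z).map f := (Measure.map_map hfm hZ).symm
  unfold entropy
  rw [hmap]
  have key : ∀ b, ((P.map Z).map f) {b} = (P.map Z) (f ⁻¹' {b}) := fun b =>
    Measure.map_apply hfm (measurableSet_singleton b)
  simp only [key]
  rw [← Finset.sum_subset (Finset.subset_univ (Finset.univ.image f))]
  · rw [Finset.sum_image (fun a _ b _ h => hf h)]
    refine Finset.sum_congr rfl fun a _ => ?_
    congr 1
    have : f ⁻¹' {f a} = {a} := by ext x; simp [hf.eq_iff]
    rw [this]
  · intro b _ hb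
    have : f ⁻¹' {b} = ∅ := by
      ext x
      simp only [Set.mem_preimage, Set.mem_singleton_iff, Set.mem_empty_iff_false, iff_false]
      intro hx
      exact hb (Finset.mem_image.2 ⟨x, Finset.mem_univ x, hx⟩)
    simp [this]

/-- **Privacy leakage of the fuzzy commitment scheme.**
For independent uniform `X` on `(ZMod 2)^n` and uniform `S` on `Fin M`, and injective `Enc`,
the helper data `W = X + Enc S` satisfies `I[W : X] = n·log 2 − log M` (in nats). -/
theorem fuzzy_commitment_privacy_leakage
    {n M : ℕ} (hn : 1 ≤ n) (hM : 1 ≤ M) [NeZero M]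
    {Ω : Type*} [MeasurableSpace Ω] (P : Measure Ω) [IsProbabilityMeasure P]
    (X : Ω → (Fin n → ZMod 2)) (S : Ω → Fin M)
    (hX : Measurable X) (hS : Measurable S)
    (hXlaw : P.map X = (PMF.uniformOfFintype (Fin n → ZMod 2)).toMeasure)
    (hSlaw : P.map S = (PMF.uniformOfFintype (Fin M)).toMeasure)
    (hindep : IndepFun X S P)
    (Enc : Fin M → (Fin n → ZMod 2)) (hEnc : Function.Injective Enc) :
    mutualInfo (fun ω => X ω + Enc (S ω)) X P
      = n * Real.log 2 - Real.log M := by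
  classical
  have cardA : Fintype.card (Fin n → ZMod 2) = 2 ^ n := by
    simp [Fintype.card_fun, ZMod.card]
  have hMne : (M : ℝ≥0∞) ≠ 0 := by exact_mod_cast (NeZero.ne M)
  -- joint law
  have hXS : Measurable fun ω => (X ω, S ω) := hX.prodMk hS
  have hjoint : P.map (fun ω => (X ω, S ω)) = (P.map X).prod (P.map S) :=
    (indepFun_iff_map_prod_eq_prod_map_map hX.aemeasurable hS.aemeasurable).1 hindep
  have hXmass : ∀ a : (Fin n → ZMod 2),
      (P.map X) {a} = (Fintype.card (Fin n → ZMod 2) : ℝ≥0∞)⁻¹ := by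
    intro a
    rw [hXlaw, PMF.toMeasure_apply_singleton _ _ (measurableSet_singleton a),
      PMF.uniformOfFintype_apply]
  have hSmass : ∀ s : Fin M, (P.map S) {s} = (M : ℝ≥0∞)⁻¹ := by
    intro s
    rw [hSlaw, PMF.toMeasure_apply_singleton _ _ (measurableSet_singleton s),
      PMF.uniformOfFintype_apply, Fintype.card_fin]
  have hpairmass : ∀ (a : Fin n → ZMod 2) (s : Fin M),
      (P.map fun ω => (X ω, S ω)) {(a, s)}
        = (Fintype.card (Fin n → ZMod 2) : ℝ≥0∞)⁻¹ * (M : ℝ≥0∞)⁻¹ := by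
    intro a s
    have : ({(a, s)} : Set ((Fin n → ZMod 2) × Fin M)) = {a} ×ˢ {s} := by
      simp [Set.prod_eq]
      ext x; simp [Prod.ext_iff]
    rw [hjoint, this, Measure.prod_prod, hXmass, hSmass]
  -- entropy of X
  have hHX : entropy X P = n * Real.log 2 := by
    rw [entropy_of_uniform_mass X P hXmass, cardA]
    push_cast
    rw [Real.log_pow]
  -- entropy of W
  have hWmass : ∀ w : (Fin n → ZMod 2),
      (P.map fun ω => X ω + Enc (S ω)) {w} = (Fintype.card (Fin n → ZMod 2) : ℝ≥0∞)⁻¹ := by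
    intro w
    have hg : Measurable fun p : (Fin n → ZMod 2) × Fin M => p.1 + Enc p.2 :=
      measurable_of_countable _
    have hcomp : (fun ω => X ω + Enc (S ω))
        = (fun p : (Fin n → ZMod 2) × Fin M => p.1 + Enc p.2) ∘ (fun ω => (X ω, S ω)) := rfl
    rw [hcomp, ← Measure.map_map hg hXS,
      Measure.map_apply hg (measurableSet_singleton w)]
    have hpre : (fun p : (Fin n → ZMod 2) × Fin M => p.1 + Enc p.2) ⁻¹' {w}
        = ⋃ s : Fin M, {(w - Enc s, s)} := by
      ext ⟨x, s⟩
      simp only [Set.mem_preimage, Set.mem_singleton_iff, Set.mem_iUnion, Prod.ext_iff]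
      constructor
      · intro h; exact ⟨s, by rw [← h]; abel, rfl⟩
      · rintro ⟨s', hx, rfl⟩; rw [hx]; abel
    rw [hpre, measure_iUnion _ (fun s => measurableSet_singleton _)]
    · simp only [hpairmass]
      rw [tsum_fintype, Finset.sum_const, Finset.card_univ, Fintype.card_fin, nsmul_eq_mul,
        mul_comm ((Fintype.card (Fin n → ZMod 2) : ℝ≥0∞))⁻¹, ← mul_assoc,
        ENNReal.mul_inv_cancel hMne (by finiteness), one_mul]
    · intro s s' hss
      simp only [Set.disjoint_singleton, ne_eq, Prod.ext_iff, not_and]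
      intro _; exact hss
  have hHW : entropy (fun ω => X ω + Enc (S ω)) P = n * Real.log 2 := by
    rw [entropy_of_uniform_mass _ P hWmass, cardA]
    push_cast
    rw [Real.log_pow]
  -- entropy of (W, X)
  have hinjh : Function.Injective
      (fun p : (Fin n → ZMod 2) × Fin M => (p.1 + Enc p.2, p.1)) := by
    rintro ⟨x, s⟩ ⟨x', s'⟩ h
    simp only [Prod.ext_iff] at h ⊢
    obtain ⟨h1, h2⟩ := h
    subst h2
    exact ⟨rfl, hEnc (by exact add_left_cancel h1)⟩
  have hHWX : entropy (fun ω => (X ω + Enc (S ω), X ω)) P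
      = n * Real.log 2 + Real.log M := by
    have hcomp : (fun ω => (X ω + Enc (S ω), X ω))
        = (fun p : (Fin n → ZMod 2) × Fin M => (p.1 + Enc p.2, p.1))
            ∘ (fun ω => (X ω, S ω)) := rfl
    rw [hcomp, entropy_comp_injective _ hXS P _ hinjh]
    have hXSmass : ∀ a : (Fin n → ZMod 2) × Fin M,
        (P.map fun ω => (X ω, S ω)) {a}
          = (Fintype.card ((Fin n → ZMod 2) × Fin M) : ℝ≥0∞)⁻¹ := by
      rintro ⟨a, s⟩
      rw [hpairmass, Fintype.card_prod, Fintype.card_fin, Nat.cast_mul,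
        ENNReal.mul_inv (Or.inl (by exact_mod_cast Fintype.card_ne_zero))
          (Or.inl (ENNReal.natCast_ne_top _))]
    rw [entropy_of_uniform_mass _ P hXSmass, Fintype.card_prod, cardA, Fintype.card_fin]
    have h2 : (0:ℝ) < (2:ℝ)^n := by positivity
    have hMpos : (0:ℝ) < M := by exact_mod_cast hM
    push_cast
    rw [Real.log_mul (ne_of_gt h2) (ne_of_gt hMpos), Real.log_pow]
  unfold mutualInfo
  rw [hHW, hHX, hHWX]
  ring
end

section
/- Fix m ≥ 1, σ > 0, strictly increasing boundaries b_0 < … < b_{2^m}, and δ ≥ 0 with δ < min gap between consecutive boundaries. Let T ~ gaussianReal 0 1 and N ~ gaussianReal 0 σ² be independent, and define the surviving region S_δ = (b_0, b_1 − δ/2] ∪ ⋃_{k=1}^{2^m − 2} (b_k + δ/2, b_{k+1} − δ/2] ∪ (b_{2^m − 1} + δ/2, b_{2^m}]. Then the probability of the event { T ∈ S_δ and T + N lies in the same quantization interval (b_k, b_{k+1}] as T } equals ∫_{b_0}^{b_1 − δ/2} [Q((b_0 − t)/σ) − Q((b_1 − t)/σ)] φ(t) dt + Σ_{k=1}^{2^m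 − 2} ∫_{b_k + δ/2}^{b_{k+1} − δ/2} [Q((b_k − t)/σ) − Q((b_{k+1} − t)/σ)] φ(t) dt + ∫_{b_{2^m − 1} + δ/2}^{b_{2^m}} [Q((b_{2^m − 1} − t)/σ) − Q((b_{2^m} − t)/σ)] φ(t) dt, where φ is the standard Gaussian density. (This is the correctness probability identity (5): P_c(δ)·(Q(b_0) − Q(b_{2^m}))·(1 − γ(δ)) equals this sum.) -/
open MeasureTheory ProbabilityTheory
open scoped NNReal ENNReal

/-- The Gaussian Q-function: the probability that a standard Gaussian exceeds `x`. -/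
noncomputable def Q (x : ℝ) : ℝ := ((gaussianReal 0 1) (Set.Ioi x)).toReal

lemma gaussianReal_sq_eq_map (σ : ℝ≥0) :
    gaussianReal 0 (σ ^ 2) = (gaussianReal 0 1).map ((σ : ℝ) * ·) := by
  rw [gaussianReal_map_const_mul ((σ : ℝ))]
  refine (congr_arg₂ gaussianReal (by ring) ?_).symm
  rw [mul_one]
  exact NNReal.eq (by push_cast; ring)

lemma toReal_gaussian_Ioi (σ : ℝ≥0) (hσ : 0 < σ) (a : ℝ) :
    ((gaussianReal 0 (σ ^ 2)) (Set.Ioi a)).toReal = Q (a / σ) := by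
  have hσ' : (0 : ℝ) < σ := hσ
  rw [gaussianReal_sq_eq_map σ,
    Measure.map_apply (measurable_const_mul _) measurableSet_Ioi]
  unfold Q
  congr 2
  ext x
  simp only [Set.mem_preimage, Set.mem_Ioi]
  rw [div_lt_iff₀ hσ', mul_comm]

lemma toReal_gaussian_Ioc (σ : ℝ≥0) (hσ : 0 < σ) {a c : ℝ} (hac : a ≤ c) :
    ((gaussianReal 0 (σ ^ 2)) (Set.Ioc a c)).toReal = Q (a / σ) - Q (c / σ) := by
  rw [← Set.Ioi_diff_Ioi,
    measure_diff (Set.Ioi_subset_Ioi hac) measurableSet_Ioi.nullMeasurableSet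
      (measure_ne_top _ _),
    ENNReal.toReal_sub_of_le (measure_mono (Set.Ioi_subset_Ioi hac)) (measure_ne_top _ _),
    toReal_gaussian_Ioi σ hσ, toReal_gaussian_Ioi σ hσ]

lemma key_term (σ : ℝ≥0) (hσ : 0 < σ) {a c : ℝ} (hac : a ≤ c) (x y : ℝ) :
    (((gaussianReal 0 1).prod (gaussianReal 0 (σ ^ 2)))
        {p : ℝ × ℝ | p.1 ∈ Set.Ioc x y ∧ p.1 + p.2 ∈ Set.Ioc a c}).toReal
      = ∫ t in Set.Ioc x y,
          (Q ((a - t) / σ) - Q ((c - t) / σ)) * gaussianPDFReal 0 1 t := by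
  set μ := gaussianReal 0 1
  set ν := gaussianReal 0 (σ ^ 2 : ℝ≥0) with hν
  have hS : MeasurableSet {p : ℝ × ℝ | p.1 ∈ Set.Ioc x y ∧ p.1 + p.2 ∈ Set.Ioc a c} :=
    (measurable_fst measurableSet_Ioc).inter
      ((measurable_fst.add measurable_snd) measurableSet_Ioc)
  rw [Measure.prod_apply hS]
  have hpre : ∀ t : ℝ, ν (Prod.mk t ⁻¹' {p : ℝ × ℝ | p.1 ∈ Set.Ioc x y ∧ p.1 + p.2 ∈ Set.Ioc a c})
      = Set.indicator (Set.Ioc x y) (fun t => ν (Set.Ioc (a - t) (c - t))) t := by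
    intro t
    by_cases ht : t ∈ Set.Ioc x y
    · rw [Set.indicator_of_mem ht]
      congr 1
      ext n
      simp only [Set.mem_preimage, Set.mem_setOf_eq, Set.mem_Ioc] at *
      constructor
      · rintro ⟨-, h1, h2⟩; exact ⟨by linarith, by linarith⟩
      · rintro ⟨h1, h2⟩; exact ⟨⟨ht.1, ht.2⟩, by linarith, by linarith⟩
    · rw [Set.indicator_of_notMem ht]
      convert measure_empty (μ := ν)
      ext n
      simp only [Set.mem_preimage, Set.mem_setOf_eq, ht, false_and, Set.mem_empty_iff_false]
  simp_rw [hpre]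
  rw [lintegral_indicator measurableSet_Ioc]
  have hmeas : Measurable (fun t : ℝ => ν (Set.Ioc (a - t) (c - t))) := by
    have hS' : MeasurableSet {p : ℝ × ℝ | p.1 + p.2 ∈ Set.Ioc a c} :=
      (measurable_fst.add measurable_snd) measurableSet_Ioc
    have heq : (fun t : ℝ => ν (Set.Ioc (a - t) (c - t)))
        = fun t => ν (Prod.mk t ⁻¹' {p : ℝ × ℝ | p.1 + p.2 ∈ Set.Ioc a c}) := by
      funext t
      congr 1
      ext n
      simp only [Set.mem_Ioc, Set.mem_preimage, Set.mem_setOf_eq]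
      constructor
      · rintro ⟨h1, h2⟩; exact ⟨by linarith, by linarith⟩
      · rintro ⟨h1, h2⟩; exact ⟨by linarith, by linarith⟩
    rw [heq]
    exact measurable_measure_prodMk_left hS' 
  rw [← integral_toReal hmeas.aemeasurable
    (ae_of_all _ fun t => measure_lt_top _ _)]
  have hpt : ∀ t : ℝ, (ν (Set.Ioc (a - t) (c - t))).toReal
      = Q ((a - t) / σ) - Q ((c - t) / σ) := fun t =>
    toReal_gaussian_Ioc σ hσ (by linarith)
  simp_rw [hpt]
  -- now rewrite integral wrt μ as integral wrt volume with density
  have hμ : μ = volume.withDensity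
      (fun t => ((gaussianPDFReal 0 1 t).toNNReal : ℝ≥0∞)) := by
    rw [show μ = gaussianReal 0 1 from rfl, gaussianReal_of_var_ne_zero 0 one_ne_zero]
    congr 1
  rw [hμ, setIntegral_withDensity_eq_setIntegral_smul
    (measurable_gaussianPDFReal 0 1).real_toNNReal _ measurableSet_Ioc]
  refine setIntegral_congr_fun measurableSet_Ioc fun t _ => ?_
  rw [NNReal.smul_def, smul_eq_mul, Real.coe_toNNReal _ (gaussianPDFReal_nonneg 0 1 t),
    mul_comm]

/-- **Correctness probability identity (5).**
Let `T ~ N(0,1)` and `N ~ N(0,σ²)` be independent. The probability that `T` survives the QoS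
elimination rule (it is not within `δ/2` of an interior boundary) and the noisy coefficient
`T + N` is quantized into the same interval `(b_k, b_{k+1}]` as `T` equals the sum of the
integrals of `(Q((b_k − t)/σ) − Q((b_{k+1} − t)/σ))·φ(t)` over the surviving sub-intervals,
where `φ` is the standard Gaussian density. -/
theorem correctness_probability_identity {m : ℕ} (hm : 1 ≤ m)
    (σ : ℝ≥0) (hσ : 0 < σ)
    (b : ℕ → ℝ) (hmono : ∀ k < 2 ^ m, b k < b (k + 1))
    (δ : ℝ) (hδ : 0 ≤ δ) (hgap : ∀ k < 2 ^ m, δ < b (k + 1) - b k)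
    {Ω : Type*} [MeasurableSpace Ω] (P : Measure Ω) [IsProbabilityMeasure P]
    (T N : Ω → ℝ) (hT : Measurable T) (hN : Measurable N)
    (hlaw : P.map (fun ω => (T ω, N ω))
      = (gaussianReal 0 1).prod (gaussianReal 0 (σ ^ 2))) :
    (P {ω | ∃ k < 2 ^ m,
        T ω ∈ Set.Ioc (b k + if k = 0 then 0 else δ / 2)
                      (b (k + 1) - if k = 2 ^ m - 1 then 0 else δ / 2) ∧
        T ω + N ω ∈ Set.Ioc (b k) (b (k + 1))}).toReal
      = (∫ t in Set.Ioc (b 0) (b 1 - δ / 2),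
            (Q ((b 0 - t) / σ) - Q ((b 1 - t) / σ)) * gaussianPDFReal 0 1 t)
        + (∑ k ∈ Finset.Ioo 0 (2 ^ m - 1),
            ∫ t in Set.Ioc (b k + δ / 2) (b (k + 1) - δ / 2),
              (Q ((b k - t) / σ) - Q ((b (k + 1) - t) / σ)) * gaussianPDFReal 0 1 t)
        + ∫ t in Set.Ioc (b (2 ^ m - 1) + δ / 2) (b (2 ^ m)),
            (Q ((b (2 ^ m - 1) - t) / σ) - Q ((b (2 ^ m) - t) / σ))
              * gaussianPDFReal 0 1 t := by
  set M := 2 ^ m with hM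
  have hM2 : 2 ≤ M := by
    calc 2 = 2 ^ 1 := (pow_one 2).symm
    _ ≤ 2 ^ m := Nat.pow_le_pow_right (by norm_num) hm
  -- monotonicity of b on [0, M]
  have bmono : ∀ i j, i ≤ j → j ≤ M → b i ≤ b j := by
    intro i j hij hjM
    induction j with
    | zero => simp [Nat.le_zero.mp hij]
    | succ n ih =>
      rcases Nat.eq_or_lt_of_le hij with h | h
      · simp [h]
      · exact le_trans (ih (Nat.lt_succ_iff.mp h) (le_trans (Nat.le_succ n) hjM))
          (le_of_lt (hmono n (Nat.lt_of_succ_le hjM)))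
  -- the intervals
  set L : ℕ → ℝ := fun k => b k + if k = 0 then 0 else δ / 2 with hL
  set U : ℕ → ℝ := fun k => b (k + 1) - if k = M - 1 then 0 else δ / 2 with hU
  have hI_sub : ∀ k, Set.Ioc (L k) (U k) ⊆ Set.Ioc (b k) (b (k + 1)) := by
    intro k
    apply Set.Ioc_subset_Ioc
    · simp only [hL, le_add_iff_nonneg_right]
      split <;> [exact le_refl 0; linarith]
    · simp only [hU, sub_le_self_iff]
      split <;> [exact le_refl 0; linarith]
  -- the sets
  set S : ℕ → Set (ℝ × ℝ) := fun k =>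
    {p : ℝ × ℝ | p.1 ∈ Set.Ioc (L k) (U k) ∧ p.1 + p.2 ∈ Set.Ioc (b k) (b (k + 1))} with hSdef
  have hSmeas : ∀ k, MeasurableSet (S k) := fun k =>
    (measurable_fst measurableSet_Ioc).inter
      ((measurable_fst.add measurable_snd) measurableSet_Ioc)
  have hUnion : {ω | ∃ k < M,
        T ω ∈ Set.Ioc (L k) (U k) ∧ T ω + N ω ∈ Set.Ioc (b k) (b (k + 1))}
      = (fun ω => (T ω, N ω)) ⁻¹' (⋃ k ∈ Finset.range M, S k) := by
    ext ω
    simp only [Set.mem_setOf_eq, Set.mem_preimage, Set.mem_iUnion, Finset.mem_range, hSdef]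
    constructor
    · rintro ⟨k, hk, h1, h2⟩; exact ⟨k, hk, h1, h2⟩
    · rintro ⟨k, hk, h1, h2⟩; exact ⟨k, hk, h1, h2⟩
  have hUmeas : MeasurableSet (⋃ k ∈ Finset.range M, S k) :=
    MeasurableSet.biUnion (Finset.range M).countable_toSet fun k _ => hSmeas k
  rw [hUnion, ← Measure.map_apply (hT.prodMk hN) hUmeas, hlaw]
  -- disjointness
  have hdisj : (↑(Finset.range M) : Set ℕ).PairwiseDisjoint S := by
    intro i hi j hj hij
    simp only [Finset.coe_range, Set.mem_Iio] at hi hj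
    refine Set.disjoint_left.mpr fun p hpi hpj => ?_
    obtain ⟨h1i, h2i⟩ := hpi
    obtain ⟨h1j, h2j⟩ := hpj
    have hIi := hI_sub i h1i
    have hIj := hI_sub j h1j
    rcases lt_or_gt_of_ne hij with h | h
    · have : b (i + 1) ≤ b j := bmono (i + 1) j h (le_of_lt hj)
      have := hIi.2
      have := hIj.1
      linarith
    · have : b (j + 1) ≤ b i := bmono (j + 1) i h (le_of_lt hi)
      have := hIj.2
      have := hIi.1
      linarith
  rw [measure_biUnion_finset hdisj fun k _ => hSmeas k, ENNReal.toReal_sum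
    (fun k _ => measure_ne_top _ _)]
  -- each term
  have hterm : ∀ k < M, (((gaussianReal 0 1).prod (gaussianReal 0 (σ ^ 2))) (S k)).toReal
      = ∫ t in Set.Ioc (L k) (U k),
          (Q ((b k - t) / σ) - Q ((b (k + 1) - t) / σ)) * gaussianPDFReal 0 1 t := by
    intro k hk
    exact key_term σ hσ (le_of_lt (hmono k hk)) (L k) (U k)
  rw [Finset.sum_congr rfl fun k hk => hterm k (Finset.mem_range.mp hk)]
  -- split the sum
  have hset : Finset.range M = insert 0 (insert (M - 1) (Finset.Ioo 0 (M - 1))) := by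
    ext k
    simp only [Finset.mem_range, Finset.mem_insert, Finset.mem_Ioo]
    omega
  rw [hset, Finset.sum_insert (by simp only [Finset.mem_insert, Finset.mem_Ioo]; omega),
    Finset.sum_insert (by simp only [Finset.mem_Ioo]; omega)]
  have h0 : L 0 = b 0 := by simp [hL]
  have hU0 : U 0 = b 1 - δ / 2 := by
    have h : (0 : ℕ) ≠ M - 1 := by omega
    simp only [hU, zero_add, if_neg h]
  have hLlast : L (M - 1) = b (M - 1) + δ / 2 := by
    have h : M - 1 ≠ 0 := by omega
    simp only [hL, if_neg h]
  have hUlast : U (M - 1) = b M := by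
    have h : M - 1 + 1 = M := by omega
    show b (M - 1 + 1) - (if M - 1 = M - 1 then 0 else δ / 2) = b M
    rw [if_pos rfl, sub_zero, h]
  have hmid : ∀ k ∈ Finset.Ioo 0 (M - 1),
      (∫ t in Set.Ioc (L k) (U k),
          (Q ((b k - t) / σ) - Q ((b (k + 1) - t) / σ)) * gaussianPDFReal 0 1 t)
      = ∫ t in Set.Ioc (b k + δ / 2) (b (k + 1) - δ / 2),
          (Q ((b k - t) / σ) - Q ((b (k + 1) - t) / σ)) * gaussianPDFReal 0 1 t := by
    intro k hk
    simp only [Finset.mem_Ioo] at hk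
    have h1 : k ≠ 0 := by omega
    have h2 : k ≠ M - 1 := by omega
    rw [show L k = b k + δ / 2 by simp only [hL, if_neg h1],
      show U k = b (k + 1) - δ / 2 by simp only [hU, if_neg h2]]
  rw [Finset.sum_congr rfl hmid, h0, hU0, hLlast, hUlast,
    show M - 1 + 1 = M from by omega]
  ring
end
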